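/- For fixed a ∈ (0,1), define F(a,s) = (a^{(1+s)/(2s)}/(1−a)^{1/(2s)}) · ∫_a^1 ((1−u)^{1/(2s)}/u^{(1+s)/(2s)}) · (1/2 + 1/(2s(1−u))) du for s > 0. Then F(a,s) → 2√a − a as s → ∞. -/

import Mathlib

open MeasureTheory Filter Topology

noncomputable section

/-- `F(a,s) = (a^((1+s)/(2s))/(1−a)^(1/(2s))) ·
∫_a^1 ((1−u)^(1/(2s))/u^((1+s)/(2s))) · (1/2 + 1/(2s(1−u))) du`. -/
def F (a s : ℝ) : ℝ :=
  (a ^ ((1 + s) / (2 * s)) / (1 - a) ^ (1 / (2 * s))) *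
    ∫ u in a..1,
      ((1 - u) ^ (1 / (2 * s)) / u ^ ((1 + s) / (2 * s))) * (1 / 2 + 1 / (2 * s * (1 - u)))

/-- the "nice" part of the integrand after integrating the singular part by parts -/
def phiF (s u : ℝ) : ℝ :=
  (1 - u) ^ (1 / (2 * s)) * (1 / 2 * u ^ (-((1 + s) / (2 * s)))) -
    (1 - u) ^ (1 / (2 * s)) * ((1 + s) / (2 * s) * u ^ (-((1 + s) / (2 * s)) - 1))

/-- the exact-derivative part of the integrand -/
def HdF (s u : ℝ) : ℝ :=
  (1 - u) ^ (1 / (2 * s) - 1) * (1 / (2 * s) * u ^ (-((1 + s) / (2 * s)))) +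
    (1 - u) ^ (1 / (2 * s)) * ((1 + s) / (2 * s) * u ^ (-((1 + s) / (2 * s)) - 1))

/-- antiderivative of `HdF` -/
def HF (s u : ℝ) : ℝ := -((1 - u) ^ (1 / (2 * s)) * u ^ (-((1 + s) / (2 * s))))

lemma integrable_onesub_rpow (a c : ℝ) (hc : (-1 : ℝ) < c) :
    IntervalIntegrable (fun u : ℝ => (1 - u) ^ c) volume a 1 := by
  have h := intervalIntegral.intervalIntegrable_rpow' (a := 1 - a) (b := 0) hc
  simpa using h.comp_sub_left 1

lemma continuousOn_rpow_aux {a : ℝ} (ha : 0 < a) (c : ℝ) :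
    ContinuousOn (fun u : ℝ => u ^ c) (Set.uIcc a 1) := by
  apply ContinuousOn.rpow_const continuousOn_id
  intro x hx
  left
  have := hx.1
  have hmin : min a 1 ≤ x := this
  have : 0 < x := lt_of_lt_of_le (lt_min ha one_pos) hmin
  exact ne_of_gt this

lemma continuousOn_onesub_rpow {a : ℝ} (c : ℝ) (hc : 0 ≤ c) :
    ContinuousOn (fun u : ℝ => (1 - u) ^ c) (Set.uIcc a 1) := by
  apply ContinuousOn.rpow_const (by fun_prop)
  intro x _
  right; exact hc

lemma intervalIntegrable_phiF {a : ℝ} (ha : 0 < a) (s : ℝ) (hs : 1 ≤ s) :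
    IntervalIntegrable (phiF s) volume a 1 := by
  have h2s : (0:ℝ) ≤ 1 / (2 * s) := by positivity
  apply ContinuousOn.intervalIntegrable
  apply ContinuousOn.sub
  · exact (continuousOn_onesub_rpow _ h2s).mul
      ((continuousOn_rpow_aux ha _).const_smul (1/2 : ℝ))
  · exact (continuousOn_onesub_rpow _ h2s).mul
      ((continuousOn_rpow_aux ha _).const_smul ((1 + s) / (2 * s)))

lemma intervalIntegrable_HdF {a : ℝ} (ha : 0 < a) (s : ℝ) (hs : 1 ≤ s) :
    IntervalIntegrable (HdF s) volume a 1 := by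
  have h2s : (0:ℝ) < 1 / (2 * s) := by positivity
  apply IntervalIntegrable.add
  · exact (integrable_onesub_rpow a _ (by linarith)).mul_continuousOn
      ((continuousOn_rpow_aux ha _).const_smul (1 / (2 * s)))
  · apply ContinuousOn.intervalIntegrable
    exact (continuousOn_onesub_rpow _ h2s.le).mul
      ((continuousOn_rpow_aux ha _).const_smul ((1 + s) / (2 * s)))

lemma hasDerivAt_HF {a : ℝ} (ha : 0 < a) (s : ℝ) (hs : 1 ≤ s) {u : ℝ}
    (hu : u ∈ Set.Ioo a 1) : HasDerivAt (HF s) (HdF s u) u := by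
  have hu0 : (0:ℝ) < u := lt_trans ha hu.1
  have hu1 : u < 1 := hu.2
  have h1 : HasDerivAt (fun u : ℝ => (1 - u) ^ (1 / (2 * s)))
      (1 / (2 * s) * (1 - u) ^ (1 / (2 * s) - 1) * (-1)) u := by
    have hbase : HasDerivAt (fun u : ℝ => 1 - u) (-1) u := by
      simpa using (hasDerivAt_id u).const_sub 1
    exact (Real.hasDerivAt_rpow_const (p := 1 / (2 * s))
      (Or.inl (by linarith : (1:ℝ) - u ≠ 0))).comp u hbase
  have h2 : HasDerivAt (fun u : ℝ => u ^ (-((1 + s) / (2 * s))))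
      (-((1 + s) / (2 * s)) * u ^ (-((1 + s) / (2 * s)) - 1)) u :=
    Real.hasDerivAt_rpow_const (Or.inl (ne_of_gt hu0))
  have := ((h1.mul h2).neg)
  refine this.congr_deriv ?_
  unfold HdF
  ring

lemma tendsto_HF_right {a : ℝ} (ha : 0 < a) (ha1 : a < 1) (s : ℝ) (hs : 1 ≤ s) :
    Tendsto (HF s) (𝓝[>] a) (𝓝 (-((1 - a) ^ (1 / (2 * s)) * a ^ (-((1 + s) / (2 * s)))))) := by
  have hc : ContinuousAt (HF s) a := by
    have c1 : ContinuousAt (fun u : ℝ => (1 - u) ^ (1 / (2 * s))) a := by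
      exact (Real.continuousAt_rpow_const (1 - a) _ (Or.inl (by linarith))).comp
        (by fun_prop)
    have c2 : ContinuousAt (fun u : ℝ => u ^ (-((1 + s) / (2 * s)))) a :=
      Real.continuousAt_rpow_const a _ (Or.inl (ne_of_gt ha))
    exact (c1.mul c2).neg
  exact hc.continuousWithinAt

lemma tendsto_HF_left {a : ℝ} (ha : 0 < a) (ha1 : a < 1) (s : ℝ) (hs : 1 ≤ s) :
    Tendsto (HF s) (𝓝[<] 1) (𝓝 0) := by
  have hs0 : (0:ℝ) < 1 / (2 * s) := by positivity
  have t1 : Tendsto (fun u : ℝ => (1 - u)) (𝓝[<] 1) (𝓝 0) := by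
    have hc : Continuous (fun u : ℝ => 1 - u) := continuous_const.sub continuous_id
    have := (hc.tendsto 1).mono_left (nhdsWithin_le_nhds (s := Set.Iio (1:ℝ)))
    simpa using this
  have t1' : Tendsto (fun u : ℝ => (1 - u) ^ (1 / (2 * s))) (𝓝[<] 1) (𝓝 0) := by
    have := t1.rpow (tendsto_const_nhds (x := 1 / (2 * s))) (Or.inr hs0)
    rwa [Real.zero_rpow (ne_of_gt hs0)] at this
  have t2 : Tendsto (fun u : ℝ => u ^ (-((1 + s) / (2 * s)))) (𝓝[<] 1)
      (𝓝 (1 ^ (-((1 + s) / (2 * s))))) :=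
    ((Real.continuousAt_rpow_const 1 _ (Or.inl one_ne_zero)).tendsto).mono_left
      nhdsWithin_le_nhds
  have h := (t1'.mul t2).neg
  simp only [zero_mul, neg_zero] at h
  exact h

lemma integral_HdF {a : ℝ} (ha : 0 < a) (ha1 : a < 1) (s : ℝ) (hs : 1 ≤ s) :
    ∫ u in a..1, HdF s u = (1 - a) ^ (1 / (2 * s)) * a ^ (-((1 + s) / (2 * s))) := by
  have := intervalIntegral.integral_eq_sub_of_hasDerivAt_of_tendsto ha1
    (fun x hx => hasDerivAt_HF ha s hs hx) (intervalIntegrable_HdF ha s hs)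
    (tendsto_HF_right ha ha1 s hs) (tendsto_HF_left ha ha1 s hs)
  rw [this]; ring

lemma integrand_eq {a : ℝ} (ha : 0 < a) (ha1 : a < 1) (s : ℝ) (hs : 1 ≤ s) :
    Set.EqOn (fun u : ℝ =>
        ((1 - u) ^ (1 / (2 * s)) / u ^ ((1 + s) / (2 * s))) * (1 / 2 + 1 / (2 * s * (1 - u))))
      (fun u => HdF s u + phiF s u) (Set.uIcc a 1) := by
  have hs0 : (0:ℝ) < s := by linarith
  intro u hu
  rw [Set.uIcc_of_le ha1.le] at hu
  have hu0 : (0:ℝ) < u := lt_of_lt_of_le ha hu.1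
  simp only
  rcases eq_or_lt_of_le hu.2 with h1 | h1
  · subst h1
    have e1 : (1:ℝ) - 1 = 0 := by ring
    have h2s : (1:ℝ) / (2 * s) ≠ 0 := by positivity
    have h2s' : (1:ℝ) / (2 * s) - 1 ≠ 0 := by
      have : (1:ℝ) / (2 * s) ≤ 1 / 2 := by
        rw [div_le_div_iff₀ (by linarith) (by norm_num)]; linarith
      intro h; rw [sub_eq_zero] at h; rw [h] at this; linarith
    unfold HdF phiF
    rw [e1, Real.zero_rpow h2s, Real.zero_rpow h2s']
    simp
  · -- u < 1
    have h1u : (0:ℝ) < 1 - u := by linarith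
    have hup : (0:ℝ) < u ^ ((1 + s) / (2 * s)) := Real.rpow_pos_of_pos hu0 _
    have hneg : u ^ (-((1 + s) / (2 * s))) = (u ^ ((1 + s) / (2 * s)))⁻¹ :=
      Real.rpow_neg hu0.le _
    have hneg1 : u ^ (-((1 + s) / (2 * s)) - 1) = (u ^ ((1 + s) / (2 * s)))⁻¹ / u := by
      rw [Real.rpow_sub hu0, Real.rpow_one, hneg]
    have hsub1 : (1 - u) ^ (1 / (2 * s) - 1) = (1 - u) ^ (1 / (2 * s)) / (1 - u) := by
      rw [Real.rpow_sub h1u, Real.rpow_one]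
    unfold HdF phiF
    rw [hneg, hneg1, hsub1]
    field_simp
    ring

lemma F_eq {a : ℝ} (ha : 0 < a) (ha1 : a < 1) (s : ℝ) (hs : 1 ≤ s) :
    F a s = 1 + (a ^ ((1 + s) / (2 * s)) / (1 - a) ^ (1 / (2 * s))) *
      ∫ u in a..1, phiF s u := by
  have hs0 : (0:ℝ) < s := by linarith
  have h1a : (0:ℝ) < 1 - a := by linarith
  unfold F
  rw [intervalIntegral.integral_congr (integrand_eq ha ha1 s hs),
    intervalIntegral.integral_add (intervalIntegrable_HdF ha s hs)
      (intervalIntegrable_phiF ha s hs), integral_HdF ha ha1 s hs]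
  have hpa : (0:ℝ) < a ^ ((1 + s) / (2 * s)) := Real.rpow_pos_of_pos ha _
  have hpe : (0:ℝ) < (1 - a) ^ (1 / (2 * s)) := Real.rpow_pos_of_pos h1a _
  rw [Real.rpow_neg ha.le]
  field_simp

/-- the pointwise limit of `phiF` -/
def phiLim (u : ℝ) : ℝ := 1 / 2 * u ^ (-(1/2 : ℝ)) - 1 / 2 * u ^ (-(1/2 : ℝ) - 1)

lemma tendsto_eps : Tendsto (fun s : ℝ => 1 / (2 * s)) atTop (𝓝 0) := by
  have h : Tendsto (fun s : ℝ => 2 * s) atTop atTop :=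
    (tendsto_id (α := ℝ)).const_mul_atTop two_pos
  have h2 : Tendsto (fun s : ℝ => (2 * s)⁻¹) atTop (𝓝 0) := h.inv_tendsto_atTop
  simpa only [one_div] using h2

lemma tendsto_p : Tendsto (fun s : ℝ => (1 + s) / (2 * s)) atTop (𝓝 (1/2)) := by
  have h := tendsto_eps.add_const (1/2 : ℝ)
  rw [zero_add] at h
  apply h.congr'
  filter_upwards [eventually_gt_atTop (0:ℝ)] with s hs
  field_simp

lemma tendsto_phiF {a : ℝ} (ha : 0 < a) {u : ℝ} (hu : u ∈ Set.Ioc a 1) :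
    Tendsto (fun s : ℝ => phiF s u) atTop (𝓝 (phiLim u)) := by
  have hu0 : (0:ℝ) < u := lt_trans ha hu.1
  rcases eq_or_lt_of_le hu.2 with h1 | h1
  · subst h1
    have : phiLim 1 = 0 := by unfold phiLim; simp
    rw [this]
    apply Tendsto.congr' _ tendsto_const_nhds
    filter_upwards [eventually_ge_atTop (1:ℝ)] with s hs
    unfold phiF
    have h2s : (1:ℝ) / (2 * s) ≠ 0 := by positivity
    rw [show (1:ℝ) - 1 = 0 by ring, Real.zero_rpow h2s]
    ring
  · have h1u : (1:ℝ) - u ≠ 0 := by intro h; nlinarith [h1]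
    have t1 : Tendsto (fun s : ℝ => (1 - u) ^ (1 / (2 * s))) atTop (𝓝 1) := by
      have := Filter.Tendsto.rpow (tendsto_const_nhds (x := 1 - u)) tendsto_eps
        (Or.inl h1u)
      simpa using this
    have t2 : Tendsto (fun s : ℝ => u ^ (-((1 + s) / (2 * s)))) atTop
        (𝓝 (u ^ (-(1/2 : ℝ)))) :=
      Filter.Tendsto.rpow tendsto_const_nhds tendsto_p.neg (Or.inl (ne_of_gt hu0))
    have t3 : Tendsto (fun s : ℝ => u ^ (-((1 + s) / (2 * s)) - 1)) atTop
        (𝓝 (u ^ (-(1/2 : ℝ) - 1))) :=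
      Filter.Tendsto.rpow tendsto_const_nhds (tendsto_p.neg.sub_const 1)
        (Or.inl (ne_of_gt hu0))
    have := (t1.mul (t2.const_mul (1/2 : ℝ))).sub
      (t1.mul ((tendsto_p.mul t3)))
    unfold phiF phiLim
    convert this using 2
    ring

lemma integral_phiLim {a : ℝ} (ha : 0 < a) (ha1 : a < 1) :
    ∫ u in a..1, phiLim u =
      2 - a ^ ((1:ℝ)/2) - a ^ (-(1:ℝ)/2) := by
  have key : ∀ u ∈ Set.uIcc a 1, HasDerivAt (fun u : ℝ => u ^ ((1:ℝ)/2) + u ^ (-(1:ℝ)/2))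
      (phiLim u) u := by
    intro u hu
    rw [Set.uIcc_of_le ha1.le] at hu
    have hu0 : (0:ℝ) < u := lt_of_lt_of_le ha hu.1
    have d1 : HasDerivAt (fun u : ℝ => u ^ ((1:ℝ)/2)) ((1:ℝ)/2 * u ^ ((1:ℝ)/2 - 1)) u :=
      Real.hasDerivAt_rpow_const (Or.inl (ne_of_gt hu0))
    have d2 : HasDerivAt (fun u : ℝ => u ^ (-(1:ℝ)/2)) ((-(1:ℝ)/2) * u ^ (-(1:ℝ)/2 - 1)) u :=
      Real.hasDerivAt_rpow_const (Or.inl (ne_of_gt hu0))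
    have := d1.add d2
    refine this.congr_deriv ?_
    unfold phiLim
    rw [show (1:ℝ)/2 - 1 = -(1/2 : ℝ) by norm_num, show -(1:ℝ)/2 - 1 = -(1/2:ℝ) - 1 by norm_num,
      show -(1/2:ℝ) = -(1:ℝ)/2 by norm_num]
    ring
  have hint : IntervalIntegrable phiLim volume a 1 := by
    apply ContinuousOn.intervalIntegrable
    exact ((continuousOn_rpow_aux ha _).const_smul (1/2:ℝ)).sub
      ((continuousOn_rpow_aux ha _).const_smul (1/2:ℝ))
  rw [intervalIntegral.integral_eq_sub_of_hasDerivAt key hint]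
  rw [Real.one_rpow, Real.one_rpow]
  ring_nf

lemma tendsto_integral_phiF {a : ℝ} (ha : 0 < a) (ha1 : a < 1) :
    Tendsto (fun s : ℝ => ∫ u in a..1, phiF s u) atTop
      (𝓝 (∫ u in a..1, phiLim u)) := by
  apply intervalIntegral.tendsto_integral_filter_of_dominated_convergence
    (fun _ => 1/2 * a⁻¹ + (a * a)⁻¹)
  · filter_upwards [eventually_ge_atTop (1:ℝ)] with s hs
    have h2s : (0:ℝ) ≤ 1 / (2 * s) := by positivity
    have hco : ContinuousOn (phiF s) (Set.uIcc a 1) :=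
      ((continuousOn_onesub_rpow _ h2s).mul
        ((continuousOn_rpow_aux ha _).const_smul (1/2 : ℝ))).sub
      ((continuousOn_onesub_rpow _ h2s).mul
        ((continuousOn_rpow_aux ha _).const_smul ((1 + s) / (2 * s))))
    have hsub : Set.uIoc a 1 ⊆ Set.uIcc a 1 := by
      rw [Set.uIoc_of_le ha1.le, Set.uIcc_of_le ha1.le]
      exact Set.Ioc_subset_Icc_self
    exact (hco.mono hsub).aestronglyMeasurable measurableSet_uIoc
  · filter_upwards [eventually_ge_atTop (1:ℝ)] with s hs
    apply ae_of_all
    intro u hu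
    rw [Set.uIoc_of_le ha1.le] at hu
    have hu0 : (0:ℝ) < u := lt_trans ha hu.1
    have hu1 : u ≤ 1 := hu.2
    have hs0 : (0:ℝ) < s := by linarith
    have h1u0 : (0:ℝ) ≤ 1 - u := by linarith
    have hp_pos : (0:ℝ) < (1 + s) / (2 * s) := by positivity
    have hp_le : (1 + s) / (2 * s) ≤ 1 := by
      rw [div_le_one (by linarith)]; linarith
    have hb1 : (1 - u) ^ (1 / (2 * s)) ≤ 1 :=
      Real.rpow_le_one h1u0 (by linarith) (by positivity)
    have hb1' : (0:ℝ) ≤ (1 - u) ^ (1 / (2 * s)) := Real.rpow_nonneg h1u0 _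
    have hb2 : u ^ (-((1 + s) / (2 * s))) ≤ a⁻¹ := by
      calc u ^ (-((1 + s) / (2 * s))) ≤ u ^ (-1 : ℝ) :=
            Real.rpow_le_rpow_of_exponent_ge hu0 hu1 (by linarith)
        _ = u⁻¹ := Real.rpow_neg_one u
        _ ≤ a⁻¹ := by
            apply inv_anti₀ ha hu.1.le
    have hb2' : (0:ℝ) ≤ u ^ (-((1 + s) / (2 * s))) := (Real.rpow_pos_of_pos hu0 _).le
    have hb3 : u ^ (-((1 + s) / (2 * s)) - 1) ≤ (a * a)⁻¹ := by
      calc u ^ (-((1 + s) / (2 * s)) - 1) ≤ u ^ (-2 : ℝ) :=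
            Real.rpow_le_rpow_of_exponent_ge hu0 hu1 (by linarith)
        _ = (u * u)⁻¹ := by
            rw [show (-2 : ℝ) = ((-2 : ℤ) : ℝ) by norm_num, Real.rpow_intCast, zpow_neg,
              zpow_two]
        _ ≤ (a * a)⁻¹ := by
            apply inv_anti₀ (by positivity)
            exact mul_le_mul hu.1.le hu.1.le ha.le hu0.le
    have hb3' : (0:ℝ) ≤ u ^ (-((1 + s) / (2 * s)) - 1) := (Real.rpow_pos_of_pos hu0 _).le
    unfold phiF
    have habs : |(1 - u) ^ (1 / (2 * s)) * (1 / 2 * u ^ (-((1 + s) / (2 * s)))) -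
        (1 - u) ^ (1 / (2 * s)) * ((1 + s) / (2 * s) * u ^ (-((1 + s) / (2 * s)) - 1))| ≤
        1/2 * a⁻¹ + (a * a)⁻¹ := by
      apply abs_sub_le_iff.mpr
      constructor
      · have e1 : (1 - u) ^ (1 / (2 * s)) * (1 / 2 * u ^ (-((1 + s) / (2 * s)))) ≤
            1/2 * a⁻¹ := by
          calc (1 - u) ^ (1 / (2 * s)) * (1 / 2 * u ^ (-((1 + s) / (2 * s)))) ≤
              1 * (1 / 2 * a⁻¹) := by
                apply mul_le_mul hb1 _ (by positivity) (by norm_num)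
                apply mul_le_mul_of_nonneg_left hb2 (by norm_num)
            _ = 1/2 * a⁻¹ := by ring
        have e2 : (0:ℝ) ≤ (1 - u) ^ (1 / (2 * s)) *
            ((1 + s) / (2 * s) * u ^ (-((1 + s) / (2 * s)) - 1)) := by positivity
        linarith
      · have e1 : (1 - u) ^ (1 / (2 * s)) *
            ((1 + s) / (2 * s) * u ^ (-((1 + s) / (2 * s)) - 1)) ≤ (a * a)⁻¹ := by
          calc (1 - u) ^ (1 / (2 * s)) *
              ((1 + s) / (2 * s) * u ^ (-((1 + s) / (2 * s)) - 1)) ≤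
              1 * (1 * (a * a)⁻¹) := by
                apply mul_le_mul hb1 _ (by positivity) (by norm_num)
                apply mul_le_mul hp_le hb3 hb3' (by norm_num)
            _ = (a * a)⁻¹ := by ring
        have e2 : (0:ℝ) ≤ (1 - u) ^ (1 / (2 * s)) *
            (1 / 2 * u ^ (-((1 + s) / (2 * s)))) := by positivity
        linarith
    simpa using habs
  · apply intervalIntegrable_const
  · apply ae_of_all
    intro u hu
    rw [Set.uIoc_of_le ha1.le] at hu
    exact tendsto_phiF ha hu

/-- For fixed `a ∈ (0,1)`, `F(a,s) → 2√a − a` as `s → ∞`. -/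
theorem stmt18 (a : ℝ) (ha : 0 < a) (ha1 : a < 1) :
    Tendsto (fun s : ℝ => F a s) atTop (𝓝 (2 * Real.sqrt a - a)) := by
  have h1a : (0:ℝ) < 1 - a := by linarith
  have hA : Tendsto (fun s : ℝ => a ^ ((1 + s) / (2 * s))) atTop (𝓝 (a ^ ((1:ℝ)/2))) :=
    Filter.Tendsto.rpow tendsto_const_nhds tendsto_p (Or.inl (ne_of_gt ha))
  have hB : Tendsto (fun s : ℝ => (1 - a) ^ (1 / (2 * s))) atTop (𝓝 1) := by
    have := Filter.Tendsto.rpow (tendsto_const_nhds (x := 1 - a)) tendsto_eps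
      (Or.inl (ne_of_gt h1a))
    simpa using this
  have hI := tendsto_integral_phiF ha ha1
  rw [integral_phiLim ha ha1] at hI
  have hmain : Tendsto (fun s : ℝ => 1 + (a ^ ((1 + s) / (2 * s)) / (1 - a) ^ (1 / (2 * s))) *
      ∫ u in a..1, phiF s u) atTop
      (𝓝 (1 + (a ^ ((1:ℝ)/2) / 1) * (2 - a ^ ((1:ℝ)/2) - a ^ (-(1:ℝ)/2)))) :=
    tendsto_const_nhds.add (((hA.div hB one_ne_zero)).mul hI)
  have hval : 1 + (a ^ ((1:ℝ)/2) / 1) * (2 - a ^ ((1:ℝ)/2) - a ^ (-(1:ℝ)/2)) =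
      2 * Real.sqrt a - a := by
    have hsq : a ^ ((1:ℝ)/2) = Real.sqrt a := (Real.sqrt_eq_rpow a).symm
    have hsqinv : a ^ (-(1:ℝ)/2) = (Real.sqrt a)⁻¹ := by
      rw [show (-(1:ℝ)/2) = -((1:ℝ)/2) by norm_num, Real.rpow_neg ha.le, hsq]
    rw [hsq, hsqinv]
    have hs0 : (0:ℝ) < Real.sqrt a := Real.sqrt_pos.mpr ha
    have hss : Real.sqrt a * Real.sqrt a = a := Real.mul_self_sqrt ha.le
    field_simp
    nlinarith [hss, hs0]
  rw [hval] at hmain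
  apply hmain.congr'
  filter_upwards [eventually_ge_atTop (1:ℝ)] with s hs
  exact (F_eq ha ha1 s hs).symm

end
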